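/- In the N-layer cascade network, let 1 ≤ n ≤ N and let u·ℳ be a monomial appearing in s_{n−1,L_{n−1}}^{(ℓ_0)} but in no lower-order derivative of s_{n−1,L_{n−1}}, where U is an intermediate species and ℳ involves only variables of species among {S_{k,j} : 1 ≤ k ≤ n−1} ∪ {E}. Assume ℳ does not contain two variables corresponding to species that react together, and that s_{n−1,L_{n−1}} does not divide ℳ. Then ℳ̂ := s_{n,L_n−1}·u·ℳ appears in s_{n,L_n}^{(ℓ_0+2)} and in no lower-order derivative of s_{n,L_n}; if C is the coefficient of u·ℳ in s_{n−1,L_{n−1}}^{(ℓ_0)}, the coefficient of ℳ̂ in s_{n,L_n}^{(ℓ_0+2)} equals c_{n,L_n} a_{n,L_n} C; and if C̃ is the coefficient of u·ℳ in s_{n−1,L_{n−1}}^{(ℓ_0+1)}, the coefficient of ℳ̂ in s_{n,L_n}^{(ℓ_0+3)} equals c_{n,L_n} a_{n,L_n} (C̃ − K_{n,L_n} C). -/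

import Mathlib

open MvPolynomial Finsupp

variable {σ : Type*}

/-- The total (Lie) derivative of a polynomial `φ` associated to the polynomial vector
field `f`: `φ̇ = Σ_x (∂φ/∂x)·f x`. -/
noncomputable def lieD [Fintype σ] (f : σ → MvPolynomial σ ℝ)
    (φ : MvPolynomial σ ℝ) : MvPolynomial σ ℝ :=
  ∑ x : σ, MvPolynomial.pderiv x φ * f x

/-- Iterated total (Lie) derivative. -/
noncomputable def lieDIter [Fintype σ] (f : σ → MvPolynomial σ ℝ) :
    ℕ → MvPolynomial σ ℝ → MvPolynomial σ ℝ
  | 0, φ => φ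
  | n + 1, φ => lieD f (lieDIter f n φ)

/-- Indicator of a species inside a complex, as a real number. -/
def ind [DecidableEq σ] (a x : σ) : ℝ := if a = x then 1 else 0

/-- The `N`-layer cascade network. Setting `S_{0,L_0} := E`, layer `m` (`1 ≤ m ≤ N`)
consists of the two connected components
`S_{m-1,L_{m-1}} + S_{m,0} ⇄ U_{m,1} → ⋯ ⇄ U_{m,L_m} → S_{m-1,L_{m-1}} + S_{m,L_m}`
(rate constants `a_{m,j}, b_{m,j}, c_{m,j}`, encoded as indices `0,1,2`) and
`F_m + S_{m,L_m} ⇄ V_{m,L_m} → ⋯ ⇄ V_{m,1} → F_m + S_{m,0}`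
(rate constants `ã_{m,j}, b̃_{m,j}, c̃_{m,j}`, encoded as indices `3,4,5`).
All the species `E`, `F m`, `S m j`, `U m j`, `V m j` (in the relevant index ranges)
are pairwise distinct. -/
structure Cascade (σ : Type*) where
  N : ℕ
  Npos : 1 ≤ N
  L : ℕ → ℕ
  Lpos : ∀ m, 1 ≤ m → m ≤ N → 1 ≤ L m
  E : σ
  F : ℕ → σ
  S : ℕ → ℕ → σ
  U : ℕ → ℕ → σ
  V : ℕ → ℕ → σ
  hEF : ∀ m, 1 ≤ m → m ≤ N → E ≠ F m
  hES : ∀ m j, 1 ≤ m → m ≤ N → j ≤ L m → E ≠ S m j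
  hEU : ∀ m j, 1 ≤ m → m ≤ N → 1 ≤ j → j ≤ L m → E ≠ U m j
  hEV : ∀ m j, 1 ≤ m → m ≤ N → 1 ≤ j → j ≤ L m → E ≠ V m j
  hFinj : ∀ m m', 1 ≤ m → m ≤ N → 1 ≤ m' → m' ≤ N → F m = F m' → m = m'
  hFS : ∀ m m' j', 1 ≤ m → m ≤ N → 1 ≤ m' → m' ≤ N → j' ≤ L m' → F m ≠ S m' j'
  hFU : ∀ m m' j', 1 ≤ m → m ≤ N → 1 ≤ m' → m' ≤ N → 1 ≤ j' → j' ≤ L m' → F m ≠ U m' j'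
  hFV : ∀ m m' j', 1 ≤ m → m ≤ N → 1 ≤ m' → m' ≤ N → 1 ≤ j' → j' ≤ L m' → F m ≠ V m' j'
  hSinj : ∀ m j m' j', 1 ≤ m → m ≤ N → j ≤ L m → 1 ≤ m' → m' ≤ N → j' ≤ L m' →
    S m j = S m' j' → m = m' ∧ j = j'
  hSU : ∀ m j m' j', 1 ≤ m → m ≤ N → j ≤ L m → 1 ≤ m' → m' ≤ N → 1 ≤ j' → j' ≤ L m' →
    S m j ≠ U m' j'
  hSV : ∀ m j m' j', 1 ≤ m → m ≤ N → j ≤ L m → 1 ≤ m' → m' ≤ N → 1 ≤ j' → j' ≤ L m' →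
    S m j ≠ V m' j'
  hUinj : ∀ m j m' j', 1 ≤ m → m ≤ N → 1 ≤ j → j ≤ L m → 1 ≤ m' → m' ≤ N → 1 ≤ j' →
    j' ≤ L m' → U m j = U m' j' → m = m' ∧ j = j'
  hUV : ∀ m j m' j', 1 ≤ m → m ≤ N → 1 ≤ j → j ≤ L m → 1 ≤ m' → m' ≤ N → 1 ≤ j' →
    j' ≤ L m' → U m j ≠ V m' j'
  hVinj : ∀ m j m' j', 1 ≤ m → m ≤ N → 1 ≤ j → j ≤ L m → 1 ≤ m' → m' ≤ N → 1 ≤ j' →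
    j' ≤ L m' → V m j = V m' j' → m = m' ∧ j = j'

namespace Cascade

variable [Fintype σ] [DecidableEq σ]

/-- The species `S_{m, L_m}`, with the convention `S_{0, L_0} := E`; `act (m-1)` is the
enzyme acting on the first component of layer `m`. -/
def act (c : Cascade σ) (m : ℕ) : σ := if m = 0 then c.E else c.S m (c.L m)

/-- The mass-action right-hand side of the cascade system; `k m j t` is the rate constant
of layer `m`, block `j`, with `t = 0,…,5` for `a_{m,j}, b_{m,j}, c_{m,j}, ã_{m,j},
b̃_{m,j}, c̃_{m,j}`. -/
noncomputable def rhs (c : Cascade σ) (k : ℕ → ℕ → Fin 6 → ℝ) (x : σ) :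
    MvPolynomial σ ℝ :=
  ∑ m ∈ Finset.Icc 1 c.N, ∑ j ∈ Finset.Icc 1 (c.L m),
    (C (k m j 0 * (ind (c.U m j) x - ind (c.act (m - 1)) x - ind (c.S m (j - 1)) x)) *
        (X (c.act (m - 1)) * X (c.S m (j - 1)))
      + C (k m j 1 * (ind (c.act (m - 1)) x + ind (c.S m (j - 1)) x - ind (c.U m j) x)) *
        X (c.U m j)
      + C (k m j 2 * (ind (c.act (m - 1)) x + ind (c.S m j) x - ind (c.U m j) x)) *
        X (c.U m j)
      + C (k m j 3 * (ind (c.V m j) x - ind (c.F m) x - ind (c.S m j) x)) *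
        (X (c.F m) * X (c.S m j))
      + C (k m j 4 * (ind (c.F m) x + ind (c.S m j) x - ind (c.V m j) x)) *
        X (c.V m j)
      + C (k m j 5 * (ind (c.F m) x + ind (c.S m (j - 1)) x - ind (c.V m j) x)) *
        X (c.V m j))

/-- `x^{(ℓ)}(x, k)`: the `ℓ`-th iterated total derivative of the variable `x` along the
cascade mass-action system. -/
noncomputable def deriv (c : Cascade σ) (k : ℕ → ℕ → Fin 6 → ℝ) (ℓ : ℕ) (x : σ) :
    MvPolynomial σ ℝ :=
  lieDIter (c.rhs k) ℓ (X x)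

/-- The non-intermediate `x₁` reacts with the non-intermediate `x₂` in the cascade. -/
def reactsWith (c : Cascade σ) (x₁ x₂ : σ) : Prop :=
  ∃ m j, 1 ≤ m ∧ m ≤ c.N ∧ 1 ≤ j ∧ j ≤ c.L m ∧
    ((x₁ = c.act (m - 1) ∧ x₂ = c.S m (j - 1)) ∨
     (x₂ = c.act (m - 1) ∧ x₁ = c.S m (j - 1)) ∨
     (x₁ = c.F m ∧ x₂ = c.S m j) ∨ (x₂ = c.F m ∧ x₁ = c.S m j))

/-- The exponent vector `𝒫 = ∏_{i=m+1}^n s_{i, L_i - 1}`. -/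
noncomputable def PP (c : Cascade σ) (n m : ℕ) : σ →₀ ℕ :=
  ∑ i ∈ Finset.Icc (m + 1) n, Finsupp.single (c.S i (c.L i - 1)) 1

/-- The constant `𝒞 = ∏_{i=m+1}^n c_{i, L_i} a_{i, L_i}`. -/
def CC (c : Cascade σ) (k : ℕ → ℕ → Fin 6 → ℝ) (n m : ℕ) : ℝ :=
  ∏ i ∈ Finset.Icc (m + 1) n, (k i (c.L i) 2 * k i (c.L i) 0)

/-- The constant `𝒦 = Σ_{i=m+1}^n K_{i, L_i}`. -/
def KK (c : Cascade σ) (k : ℕ → ℕ → Fin 6 → ℝ) (n m : ℕ) : ℝ :=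
  ∑ i ∈ Finset.Icc (m + 1) n, (k i (c.L i) 1 + k i (c.L i) 2)

end Cascade

/-!
Differentiating once, `ṡ_{n,L_n} = c_{n,L_n} u_{n,L_n}` plus terms through `F_n`, `V_{n,L_n}` and
layer `n + 1`, none of whose derivatives reaches `ℳ̂`; and
`u̇_{n,L_n} = a_{n,L_n} s_{n-1,L_{n-1}} s_{n,L_n-1} - K_{n,L_n} u_{n,L_n}`. Every monomial of a
derivative of positive order contains a reactant complex (an intermediate or two species reacting
together), and the only one dividing `ℳ̂` is `u`, which divides it once. So by the Leibniz rule the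
coefficient of `ℳ̂` in `(s_{n-1,L_{n-1}} s_{n,L_n-1})^{(t)}` is the coefficient `C_t` of `u·ℳ` in
`s_{n-1,L_{n-1}}^{(t)}`. Hence the coefficients `A_t` of `ℳ̂` in `u_{n,L_n}^{(t)}` satisfy `A_0 = 0`,
`A_{t+1} = a_{n,L_n} C_t - K_{n,L_n} A_t`, and `ℳ̂` has coefficient `c_{n,L_n} A_t` in
`s_{n,L_n}^{(t+1)}`. As `C_t = 0` for `t < ℓ₀`, `A_t = 0` for `t ≤ ℓ₀`, and the claims follow.
-/

open Finset

theorem Derivation.iterate_map_mul {R A : Type*} [CommSemiring R] [CommSemiring A] [Algebra R A]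
    (D : Derivation R A A) (n : ℕ) (a b : A) :
    (⇑D)^[n] (a * b) = ∑ ij ∈ antidiagonal n, n.choose ij.1 • ((⇑D)^[ij.1] a * (⇑D)^[ij.2] b) := by
  induction n with
  | zero => simp
  | succ n ih =>
    rw [sum_antidiagonal_choose_succ_nsmul (fun i j => (⇑D)^[i] a * (⇑D)^[j] b) n]
    simp only [Function.iterate_succ_apply', ih, map_sum, map_nsmul, Derivation.leibniz,
      smul_eq_mul, nsmul_add, sum_add_distrib]
    congr 1
    refine sum_congr rfl fun ij hij => ?_
    rw [Nat.choose_symm_of_eq_add (HasAntidiagonal.mem_antidiagonal.mp hij).symm, mul_comm]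

theorem MvPolynomial.coeff_mul_eq_zero_of_apply_ne_zero {R : Type*} [CommSemiring R]
    {p q : MvPolynomial σ R} {T : σ →₀ ℕ} {u : σ} (hT : T u ≤ 1)
    (hp : ∀ d ≤ T, coeff d p ≠ 0 → d u ≠ 0) (hq : ∀ d ≤ T, coeff d q ≠ 0 → d u ≠ 0) :
    coeff T (p * q) = 0 := by
  classical
  rw [coeff_mul]
  refine sum_eq_zero fun d hd => ?_
  rw [HasAntidiagonal.mem_antidiagonal] at hd
  by_contra h
  have h₁ := hp d.1 (hd ▸ le_self_add) (left_ne_zero_of_mul h)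
  have h₂ := hq d.2 (hd ▸ le_add_self) (right_ne_zero_of_mul h)
  have hu : d.1 u + d.2 u = T u := by rw [← hd, Finsupp.add_apply]
  omega

theorem Finsupp.exists_eq_of_sum_single_apply_ne_zero {ι : Type*} [Fintype ι] {z : ι → σ}
    {v : σ} (h : (∑ i, single (z i) 1 : σ →₀ ℕ) v ≠ 0) : ∃ i, z i = v := by
  rw [Finsupp.finsetSum_apply] at h
  obtain ⟨i, -, hi⟩ := exists_ne_zero_of_sum_ne_zero h
  exact ⟨i, by_contra fun hne => hi (Finsupp.single_eq_of_ne (Ne.symm hne))⟩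

theorem Finsupp.eq_or_eq_or_exists_of_apply_ne_zero {ι : Type*} [Fintype ι] {a b v : σ}
    {z : ι → σ} (h : (single a 1 + single b 1 + ∑ i, single (z i) 1 : σ →₀ ℕ) v ≠ 0) :
    v = a ∨ v = b ∨ ∃ i, z i = v := by
  by_cases ha : v = a
  · exact Or.inl ha
  by_cases hb : v = b
  · exact Or.inr (Or.inl hb)
  rw [Finsupp.add_apply, Finsupp.add_apply, Finsupp.single_eq_of_ne ha, Finsupp.single_eq_of_ne hb,
    zero_add, zero_add] at h
  exact Or.inr (Or.inr (exists_eq_of_sum_single_apply_ne_zero h))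

theorem Finsupp.single_add_ne_single {a v : σ} (h : v ≠ a) (m : σ →₀ ℕ) :
    single a 1 + m ≠ single v 1 := fun he => by
  simpa [Finsupp.single_eq_of_ne h.symm] using congrArg (· a) he

theorem MvPolynomial.coeff_X_eq_zero_of_ne {R : Type*} [CommSemiring R] {T : σ →₀ ℕ} {v : σ}
    (h : T ≠ single v 1) : coeff T (X v : MvPolynomial σ R) = 0 := by
  classical
  exact (coeff_X v T).trans (if_neg h.symm)

section LieDerivative

variable [Fintype σ] (f : σ → MvPolynomial σ ℝ)

theorem lieD_eq_mkDerivation (φ : MvPolynomial σ ℝ) : lieD f φ = mkDerivation ℝ f φ := by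
  classical
  induction φ using MvPolynomial.induction_on with
  | C a => simp [lieD]
  | add p q hp hq => simp [lieD, add_mul, sum_add_distrib, ← hp, ← hq]
  | mul_X p x hp =>
    rw [Derivation.leibniz, mkDerivation_X, ← hp]
    simp [lieD, Derivation.leibniz, pderiv_X, Pi.single_apply, add_mul, sum_add_distrib,
      Finset.mul_sum, mul_assoc]

theorem lieDIter_eq_iterate (t : ℕ) (φ : MvPolynomial σ ℝ) :
    lieDIter f t φ = (⇑(mkDerivation ℝ f))^[t] φ := by
  induction t with
  | zero => rfl
  | succ t ih => rw [Function.iterate_succ_apply', ← ih, ← lieD_eq_mkDerivation]; rfl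

theorem lieDIter_eq_pow_apply (t : ℕ) (φ : MvPolynomial σ ℝ) :
    lieDIter f t φ = ((mkDerivation ℝ f : MvPolynomial σ ℝ →ₗ[ℝ] MvPolynomial σ ℝ) ^ t) φ := by
  rw [Module.End.pow_apply, lieDIter_eq_iterate]
  rfl

theorem lieDIter_add (t : ℕ) (φ ψ : MvPolynomial σ ℝ) :
    lieDIter f t (φ + ψ) = lieDIter f t φ + lieDIter f t ψ := by
  simp only [lieDIter_eq_pow_apply, map_add]

theorem lieDIter_C_mul (t : ℕ) (r : ℝ) (φ : MvPolynomial σ ℝ) :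
    lieDIter f t (C r * φ) = C r * lieDIter f t φ := by
  simp only [lieDIter_eq_pow_apply, C_mul', map_smul]

theorem lieDIter_sum {ι : Type*} (t : ℕ) (s : Finset ι) (g : ι → MvPolynomial σ ℝ) :
    lieDIter f t (∑ i ∈ s, g i) = ∑ i ∈ s, lieDIter f t (g i) := by
  simp only [lieDIter_eq_pow_apply, map_sum]

theorem lieD_X (x : σ) : lieD f (X x) = f x := by
  rw [lieD_eq_mkDerivation, mkDerivation_X]

theorem lieDIter_succ' (t : ℕ) (φ : MvPolynomial σ ℝ) :
    lieDIter f (t + 1) φ = lieDIter f t (lieD f φ) := by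
  rw [lieDIter_eq_iterate, lieDIter_eq_iterate, lieD_eq_mkDerivation, Function.iterate_succ_apply]

theorem lieDIter_mul (t : ℕ) (φ ψ : MvPolynomial σ ℝ) :
    lieDIter f t (φ * ψ) =
      ∑ ij ∈ antidiagonal t, t.choose ij.1 • (lieDIter f ij.1 φ * lieDIter f ij.2 ψ) := by
  simp only [lieDIter_eq_iterate]
  exact (mkDerivation ℝ f).iterate_map_mul t φ ψ

theorem exists_le_of_coeff_lieD_ne_zero {φ : MvPolynomial σ ℝ} {d : σ →₀ ℕ}
    (h : coeff d (lieD f φ) ≠ 0) : ∃ x w, coeff w (f x) ≠ 0 ∧ w ≤ d := by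
  classical
  rw [lieD, coeff_sum] at h
  obtain ⟨x, -, h⟩ := exists_ne_zero_of_sum_ne_zero h
  obtain ⟨d₁, -, w, hw, rfl⟩ :=
    Finset.mem_add.1 (MvPolynomial.support_mul _ _ (MvPolynomial.mem_support_iff.2 h))
  exact ⟨x, w, MvPolynomial.mem_support_iff.1 hw, le_add_self⟩

variable {f} {T : σ →₀ ℕ} {u : σ}

theorem apply_ne_zero_of_coeff_lieDIter_succ_ne_zero
    (hf : ∀ x w, coeff w (f x) ≠ 0 → w ≤ T → w u ≠ 0) {t : ℕ} {φ : MvPolynomial σ ℝ}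
    {d : σ →₀ ℕ} (hd : d ≤ T) (h : coeff d (lieDIter f (t + 1) φ) ≠ 0) : d u ≠ 0 := by
  obtain ⟨x, w, hw, hwd⟩ := exists_le_of_coeff_lieD_ne_zero f h
  have hwu := hf x w hw (hwd.trans hd)
  exact fun hdu => hwu (Nat.eq_zero_of_le_zero (hdu ▸ hwd u))

/-- In the Leibniz expansion, a term with derivatives on both factors would need `u` twice in
`T`, and a term with `X a` underived would need `a` in `T`. -/
theorem coeff_lieDIter_X_mul (hT : T u ≤ 1) (hf : ∀ x w, coeff w (f x) ≠ 0 → w ≤ T → w u ≠ 0)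
    {a : σ} (ha : T a = 0) (ψ : MvPolynomial σ ℝ) (t : ℕ) :
    coeff T (lieDIter f t (X a * ψ)) = coeff T (lieDIter f t (X a) * ψ) := by
  classical
  rw [lieDIter_mul, coeff_sum,
    sum_eq_single_of_mem (t, 0) (HasAntidiagonal.mem_antidiagonal.2 (add_zero t))]
  · simp [lieDIter]
  rintro ⟨i, j⟩ hij hne
  rw [HasAntidiagonal.mem_antidiagonal] at hij
  dsimp only
  rw [coeff_smul]
  cases i with
  | zero => simp [coeff_X_mul', ha, lieDIter]
  | succ i =>
    obtain ⟨j, rfl⟩ : ∃ j', j = j' + 1 := ⟨j - 1, by grind⟩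
    rw [coeff_mul_eq_zero_of_apply_ne_zero hT
      (fun d hd h => apply_ne_zero_of_coeff_lieDIter_succ_ne_zero hf hd h)
      (fun d hd h => apply_ne_zero_of_coeff_lieDIter_succ_ne_zero hf hd h), smul_zero]

theorem coeff_lieDIter_X_mul_X_eq_zero (hT : T u ≤ 1)
    (hf : ∀ x w, coeff w (f x) ≠ 0 → w ≤ T → w u ≠ 0) {a b : σ} (ha : T a = 0) (hb : T b = 0)
    (t : ℕ) : coeff T (lieDIter f t (X a * X b)) = 0 := by
  classical
  rw [coeff_lieDIter_X_mul hT hf ha, coeff_mul_X', if_neg (by simpa using hb)]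

theorem coeff_lieDIter_succ_X {v : σ} {α κ : ℝ} {A : MvPolynomial σ ℝ}
    (hv : f v = C α * A + C κ * X v) (T : σ →₀ ℕ) (t : ℕ) :
    coeff T (lieDIter f (t + 1) (X v)) =
      α * coeff T (lieDIter f t A) + κ * coeff T (lieDIter f t (X v)) := by
  rw [lieDIter_succ', lieD_X, hv, lieDIter_add, lieDIter_C_mul, lieDIter_C_mul, coeff_add,
    coeff_C_mul, coeff_C_mul]

theorem coeff_lieDIter_X_eq_zero {v : σ} {α κ : ℝ} {A : MvPolynomial σ ℝ}
    (hv : f v = C α * A + C κ * X v) (hA : ∀ t, coeff T (lieDIter f t A) = 0)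
    (hT : T ≠ single v 1) (t : ℕ) : coeff T (lieDIter f t (X v)) = 0 := by
  induction t with
  | zero => exact coeff_X_eq_zero_of_ne hT
  | succ t ih => rw [coeff_lieDIter_succ_X hv, hA, ih, mul_zero, mul_zero, add_zero]

end LieDerivative

namespace Cascade

variable (c : Cascade σ)

def IsIntermediate (x : σ) : Prop :=
  ∃ m j, 1 ≤ m ∧ m ≤ c.N ∧ 1 ≤ j ∧ j ≤ c.L m ∧ (x = c.U m j ∨ x = c.V m j)

def IsSubstrate (x : σ) : Prop :=
  x = c.E ∨ ∃ m j, 1 ≤ m ∧ m ≤ c.N ∧ j ≤ c.L m ∧ x = c.S m j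

def IsSubstrateBelow (n : ℕ) (x : σ) : Prop :=
  x = c.E ∨ ∃ kk, 1 ≤ kk ∧ kk ≤ n - 1 ∧ ∃ j', j' ≤ c.L kk ∧ x = c.S kk j'

variable {c}

theorem act_of_pos {m : ℕ} (hm : 1 ≤ m) : c.act m = c.S m (c.L m) := by
  rw [act, if_neg (by omega)]

theorem isSubstrate_S {m j : ℕ} (hm1 : 1 ≤ m) (hm2 : m ≤ c.N) (hj : j ≤ c.L m) :
    c.IsSubstrate (c.S m j) :=
  Or.inr ⟨m, j, hm1, hm2, hj, rfl⟩

theorem isSubstrate_act {m : ℕ} (hm1 : 1 ≤ m) (hm2 : m ≤ c.N) : c.IsSubstrate (c.act (m - 1)) := by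
  rcases Nat.lt_or_ge 1 m with hm | hm
  · rw [act_of_pos (by omega)]
    exact isSubstrate_S (by omega) (by omega) le_rfl
  · left; rw [act, if_pos (by omega)]

theorem act_ne_S {m m' j' : ℕ} (hm1 : 1 ≤ m) (hm2 : m ≤ c.N) (hm1' : 1 ≤ m') (hm2' : m' ≤ c.N)
    (hj' : j' ≤ c.L m') (hne : m - 1 ≠ m' ∨ j' ≠ c.L m') : c.act (m - 1) ≠ c.S m' j' := by
  rcases Nat.lt_or_ge 1 m with hm | hm
  · rw [act_of_pos (by omega)]
    intro h
    obtain ⟨rfl, rfl⟩ := c.hSinj _ _ _ _ (by omega) (by omega) le_rfl hm1' hm2' hj' h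
    exact hne.elim (· rfl) (· rfl)
  · rw [act, if_pos (by omega)]
    exact c.hES m' j' hm1' hm2' hj'

theorem IsSubstrateBelow.isSubstrate {n : ℕ} {x : σ} (hx : c.IsSubstrateBelow n x)
    (hn : n ≤ c.N) : c.IsSubstrate x := by
  rcases hx with rfl | ⟨kk, hk1, hk2, j', hj', rfl⟩
  exacts [Or.inl rfl, isSubstrate_S hk1 (by omega) hj']

theorem IsSubstrateBelow.ne_S {n : ℕ} {x : σ} (hx : c.IsSubstrateBelow n x) {m j : ℕ}
    (hm1 : 1 ≤ m) (hm2 : m ≤ c.N) (hj : j ≤ c.L m) (hnm : n ≤ m) : x ≠ c.S m j := by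
  rcases hx with rfl | ⟨kk, hk1, hk2, j', hj', rfl⟩
  · exact c.hES m j hm1 hm2 hj
  · exact fun h => by have := (c.hSinj kk j' m j hk1 (by omega) hj' hm1 hm2 hj h).1; omega

theorem IsSubstrate.ne_U {x : σ} (hx : c.IsSubstrate x) {m j : ℕ} (hm1 : 1 ≤ m) (hm2 : m ≤ c.N)
    (hj1 : 1 ≤ j) (hj2 : j ≤ c.L m) : x ≠ c.U m j := by
  rcases hx with rfl | ⟨m', j', hm1', hm2', hj', rfl⟩
  · exact c.hEU m j hm1 hm2 hj1 hj2
  · exact c.hSU m' j' m j hm1' hm2' hj' hm1 hm2 hj1 hj2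

theorem IsSubstrate.ne_V {x : σ} (hx : c.IsSubstrate x) {m j : ℕ} (hm1 : 1 ≤ m) (hm2 : m ≤ c.N)
    (hj1 : 1 ≤ j) (hj2 : j ≤ c.L m) : x ≠ c.V m j := by
  rcases hx with rfl | ⟨m', j', hm1', hm2', hj', rfl⟩
  · exact c.hEV m j hm1 hm2 hj1 hj2
  · exact c.hSV m' j' m j hm1' hm2' hj' hm1 hm2 hj1 hj2

theorem IsSubstrate.ne_F {x : σ} (hx : c.IsSubstrate x) {m : ℕ} (hm1 : 1 ≤ m) (hm2 : m ≤ c.N) :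
    x ≠ c.F m := by
  rcases hx with rfl | ⟨m', j', hm1', hm2', hj', rfl⟩
  · exact c.hEF m hm1 hm2
  · exact (c.hFS m m' j' hm1 hm2 hm1' hm2' hj').symm

theorem IsSubstrate.ne_of_isIntermediate {x y : σ} (hx : c.IsSubstrate x)
    (hy : c.IsIntermediate y) : x ≠ y := by
  obtain ⟨m, j, hm1, hm2, hj1, hj2, rfl | rfl⟩ := hy
  exacts [hx.ne_U hm1 hm2 hj1 hj2, hx.ne_V hm1 hm2 hj1 hj2]

section Rhs

variable [DecidableEq σ] (c) (k : ℕ → ℕ → Fin 6 → ℝ)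

noncomputable def rhsBlock (x : σ) (m j : ℕ) : MvPolynomial σ ℝ :=
  C (k m j 0 * (ind (c.U m j) x - ind (c.act (m - 1)) x - ind (c.S m (j - 1)) x)) *
      (X (c.act (m - 1)) * X (c.S m (j - 1)))
    + C (k m j 1 * (ind (c.act (m - 1)) x + ind (c.S m (j - 1)) x - ind (c.U m j) x)) *
      X (c.U m j)
    + C (k m j 2 * (ind (c.act (m - 1)) x + ind (c.S m j) x - ind (c.U m j) x)) *
      X (c.U m j)
    + C (k m j 3 * (ind (c.V m j) x - ind (c.F m) x - ind (c.S m j) x)) *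
      (X (c.F m) * X (c.S m j))
    + C (k m j 4 * (ind (c.F m) x + ind (c.S m j) x - ind (c.V m j) x)) *
      X (c.V m j)
    + C (k m j 5 * (ind (c.F m) x + ind (c.S m (j - 1)) x - ind (c.V m j) x)) *
      X (c.V m j)

theorem rhs_eq_sum_rhsBlock (x : σ) :
    c.rhs k x = ∑ m ∈ Icc 1 c.N, ∑ j ∈ Icc 1 (c.L m), c.rhsBlock k x m j := rfl

variable {c k}

theorem rhsBlock_eq_zero {x : σ} {m j : ℕ} (hU : c.U m j ≠ x) (hact : c.act (m - 1) ≠ x)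
    (hS₀ : c.S m (j - 1) ≠ x) (hS₁ : c.S m j ≠ x) (hF : c.F m ≠ x) (hV : c.V m j ≠ x) :
    c.rhsBlock k x m j = 0 := by
  simp [rhsBlock, ind, hU, hact, hS₀, hS₁, hF, hV]

theorem rhs_U {m j : ℕ} (hm1 : 1 ≤ m) (hm2 : m ≤ c.N) (hj1 : 1 ≤ j) (hj2 : j ≤ c.L m) :
    c.rhs k (c.U m j) = C (k m j 0) * (X (c.act (m - 1)) * X (c.S m (j - 1)))
      + C (-(k m j 1 + k m j 2)) * X (c.U m j) := by
  have hsub {y : σ} (hy : c.IsSubstrate y) : y ≠ c.U m j := hy.ne_U hm1 hm2 hj1 hj2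
  rw [rhs_eq_sum_rhsBlock, sum_eq_single_of_mem m (mem_Icc.2 ⟨hm1, hm2⟩),
    sum_eq_single_of_mem j (mem_Icc.2 ⟨hj1, hj2⟩)]
  · simp [rhsBlock, ind, hsub (isSubstrate_act hm1 hm2), hsub (isSubstrate_S hm1 hm2 hj2),
      hsub (isSubstrate_S hm1 hm2 (j.sub_le 1 |>.trans hj2)), c.hFU m m j hm1 hm2 hm1 hm2 hj1 hj2,
      (c.hUV m j m j hm1 hm2 hj1 hj2 hm1 hm2 hj1 hj2).symm]
    ring
  · intro j' hj' hne
    rw [mem_Icc] at hj'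
    exact rhsBlock_eq_zero (fun h => hne (c.hUinj m j' m j hm1 hm2 hj'.1 hj'.2 hm1 hm2 hj1 hj2 h).2)
      (hsub (isSubstrate_act hm1 hm2)) (hsub (isSubstrate_S hm1 hm2 (by omega)))
      (hsub (isSubstrate_S hm1 hm2 hj'.2)) (c.hFU m m j hm1 hm2 hm1 hm2 hj1 hj2)
      (c.hUV m j m j' hm1 hm2 hj1 hj2 hm1 hm2 hj'.1 hj'.2).symm
  · intro m' hm' hne
    rw [mem_Icc] at hm'
    refine sum_eq_zero fun j' hj' => ?_
    rw [mem_Icc] at hj'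
    exact rhsBlock_eq_zero
      (fun h => hne (c.hUinj m' j' m j hm'.1 hm'.2 hj'.1 hj'.2 hm1 hm2 hj1 hj2 h).1)
      (hsub (isSubstrate_act hm'.1 hm'.2)) (hsub (isSubstrate_S hm'.1 hm'.2 (by omega)))
      (hsub (isSubstrate_S hm'.1 hm'.2 hj'.2)) (c.hFU m' m j hm'.1 hm'.2 hm1 hm2 hj1 hj2)
      (c.hUV m j m' j' hm1 hm2 hj1 hj2 hm'.1 hm'.2 hj'.1 hj'.2).symm

theorem rhs_V {m j : ℕ} (hm1 : 1 ≤ m) (hm2 : m ≤ c.N) (hj1 : 1 ≤ j) (hj2 : j ≤ c.L m) :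
    c.rhs k (c.V m j) = C (k m j 3) * (X (c.F m) * X (c.S m j))
      + C (-(k m j 4 + k m j 5)) * X (c.V m j) := by
  have hsub {y : σ} (hy : c.IsSubstrate y) : y ≠ c.V m j := hy.ne_V hm1 hm2 hj1 hj2
  rw [rhs_eq_sum_rhsBlock, sum_eq_single_of_mem m (mem_Icc.2 ⟨hm1, hm2⟩),
    sum_eq_single_of_mem j (mem_Icc.2 ⟨hj1, hj2⟩)]
  · simp [rhsBlock, ind, hsub (isSubstrate_act hm1 hm2), hsub (isSubstrate_S hm1 hm2 hj2),
      hsub (isSubstrate_S hm1 hm2 (j.sub_le 1 |>.trans hj2)), c.hFV m m j hm1 hm2 hm1 hm2 hj1 hj2,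
      c.hUV m j m j hm1 hm2 hj1 hj2 hm1 hm2 hj1 hj2]
    ring
  · intro j' hj' hne
    rw [mem_Icc] at hj'
    exact rhsBlock_eq_zero (c.hUV m j' m j hm1 hm2 hj'.1 hj'.2 hm1 hm2 hj1 hj2)
      (hsub (isSubstrate_act hm1 hm2)) (hsub (isSubstrate_S hm1 hm2 (by omega)))
      (hsub (isSubstrate_S hm1 hm2 hj'.2)) (c.hFV m m j hm1 hm2 hm1 hm2 hj1 hj2)
      (fun h => hne (c.hVinj m j' m j hm1 hm2 hj'.1 hj'.2 hm1 hm2 hj1 hj2 h).2)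
  · intro m' hm' hne
    rw [mem_Icc] at hm'
    refine sum_eq_zero fun j' hj' => ?_
    rw [mem_Icc] at hj'
    exact rhsBlock_eq_zero (c.hUV m' j' m j hm'.1 hm'.2 hj'.1 hj'.2 hm1 hm2 hj1 hj2)
      (hsub (isSubstrate_act hm'.1 hm'.2)) (hsub (isSubstrate_S hm'.1 hm'.2 (by omega)))
      (hsub (isSubstrate_S hm'.1 hm'.2 hj'.2)) (c.hFV m' m j hm'.1 hm'.2 hm1 hm2 hj1 hj2)
      (fun h => hne (c.hVinj m' j' m j hm'.1 hm'.2 hj'.1 hj'.2 hm1 hm2 hj1 hj2 h).1)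

/-- `S n (L n)` is produced in the last block of layer `n` and acts as the enzyme of every
block of layer `n + 1`. -/
theorem rhs_S_top {n : ℕ} (hn1 : 1 ≤ n) (hnN : n ≤ c.N) :
    c.rhs k (c.S n (c.L n)) = C (k n (c.L n) 2) * X (c.U n (c.L n))
      + C (-k n (c.L n) 3) * (X (c.F n) * X (c.S n (c.L n)))
      + C (k n (c.L n) 4) * X (c.V n (c.L n))
      + ∑ m ∈ Icc 1 c.N, if m = n + 1 then ∑ j ∈ Icc 1 (c.L m),
          (C (-k m j 0) * (X (c.S n (c.L n)) * X (c.S m (j - 1)))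
            + C (k m j 1 + k m j 2) * X (c.U m j)) else 0 := by
  have hLn := c.Lpos n hn1 hnN
  have hx : c.IsSubstrate (c.S n (c.L n)) := isSubstrate_S hn1 hnN le_rfl
  have hSx {m j : ℕ} (hm1 : 1 ≤ m) (hm2 : m ≤ c.N) (hj : j ≤ c.L m) (hne : m ≠ n ∨ j ≠ c.L n) :
      c.S m j ≠ c.S n (c.L n) := fun h => by
    have := c.hSinj m j n (c.L n) hm1 hm2 hj hn1 hnN le_rfl h; omega
  have hlayer : ∀ m ∈ Icc 1 c.N, ∑ j ∈ Icc 1 (c.L m), c.rhsBlock k (c.S n (c.L n)) m j =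
      (if m = n then C (k n (c.L n) 2) * X (c.U n (c.L n))
        + C (-k n (c.L n) 3) * (X (c.F n) * X (c.S n (c.L n)))
        + C (k n (c.L n) 4) * X (c.V n (c.L n)) else 0)
      + if m = n + 1 then ∑ j ∈ Icc 1 (c.L m),
          (C (-k m j 0) * (X (c.S n (c.L n)) * X (c.S m (j - 1)))
            + C (k m j 1 + k m j 2) * X (c.U m j)) else 0 := by
    intro m hm
    rw [mem_Icc] at hm
    have hblock {j : ℕ} (hj : j ∈ Icc 1 (c.L m)) : c.U m j ≠ c.S n (c.L n) ∧
        c.F m ≠ c.S n (c.L n) ∧ c.V m j ≠ c.S n (c.L n) := by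
      rw [mem_Icc] at hj
      exact ⟨(hx.ne_U hm.1 hm.2 hj.1 hj.2).symm, (hx.ne_F hm.1 hm.2).symm,
        (hx.ne_V hm.1 hm.2 hj.1 hj.2).symm⟩
    have hact : m ≠ n + 1 → c.act (m - 1) ≠ c.S n (c.L n) := fun h =>
      act_ne_S hm.1 hm.2 hn1 hnN le_rfl (Or.inl (by omega))
    by_cases hmn : m = n
    · rw [if_pos hmn, if_neg (by omega), add_zero, hmn,
        sum_eq_single_of_mem (c.L n) (mem_Icc.2 ⟨hLn, le_rfl⟩)]
      · obtain ⟨hU, hF, hV⟩ := hblock (hmn ▸ mem_Icc.2 ⟨hLn, le_rfl⟩)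
        rw [hmn] at hU hF hV hact
        simp [rhsBlock, ind, hU, hF, hV, hact (by omega),
          hSx hn1 hnN (Nat.sub_le _ 1) (Or.inr (by omega))]
      · intro j hj hne
        obtain ⟨hU, hF, hV⟩ := hblock (hmn ▸ hj)
        rw [hmn] at hU hF hV hact
        rw [mem_Icc] at hj
        exact rhsBlock_eq_zero hU (hact (by omega))
          (hSx (j := j - 1) hn1 hnN (by omega) (Or.inr (by omega)))
          (hSx hn1 hnN hj.2 (Or.inr hne)) hF hV
    by_cases hmn' : m = n + 1
    · rw [if_neg hmn, if_pos hmn', zero_add]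
      refine sum_congr rfl fun j hj => ?_
      obtain ⟨hU, hF, hV⟩ := hblock hj
      rw [mem_Icc] at hj
      have hact' : c.act (m - 1) = c.S n (c.L n) := by
        rw [hmn', Nat.add_sub_cancel, act_of_pos hn1]
      simp [rhsBlock, ind, hact', hU, hF, hV, hSx (j := j - 1) hm.1 hm.2 (by omega) (Or.inl hmn),
        hSx hm.1 hm.2 hj.2 (Or.inl hmn)]
      ring
    · rw [if_neg hmn, if_neg hmn', add_zero]
      refine sum_eq_zero fun j hj => ?_
      obtain ⟨hU, hF, hV⟩ := hblock hj
      rw [mem_Icc] at hj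
      exact rhsBlock_eq_zero hU (hact hmn') (hSx (j := j - 1) hm.1 hm.2 (by omega) (Or.inl hmn))
        (hSx hm.1 hm.2 hj.2 (Or.inl hmn)) hF hV
  rw [rhs_eq_sum_rhsBlock, sum_congr rfl hlayer, sum_add_distrib, Finset.sum_ite_eq',
    if_pos (mem_Icc.2 ⟨hn1, hnN⟩)]

variable (c) in
def IsReactantComplex (w : σ →₀ ℕ) : Prop :=
  ∃ m j, 1 ≤ m ∧ m ≤ c.N ∧ 1 ≤ j ∧ j ≤ c.L m ∧
    (w = single (c.U m j) 1 ∨ w = single (c.V m j) 1 ∨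
      w = single (c.act (m - 1)) 1 + single (c.S m (j - 1)) 1 ∨
      w = single (c.F m) 1 + single (c.S m j) 1)

theorem isReactantComplex_of_coeff_rhs_ne_zero {x : σ} {w : σ →₀ ℕ}
    (h : coeff w (c.rhs k x) ≠ 0) : c.IsReactantComplex w := by
  rw [rhs_eq_sum_rhsBlock, coeff_sum] at h
  obtain ⟨m, hm, h⟩ := exists_ne_zero_of_sum_ne_zero h
  rw [coeff_sum] at h
  obtain ⟨j, hj, h⟩ := exists_ne_zero_of_sum_ne_zero h
  rw [mem_Icc] at hm hj
  refine ⟨m, j, hm.1, hm.2, hj.1, hj.2, ?_⟩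
  by_contra! hw
  obtain ⟨hU, hV, hS, hF⟩ := hw
  simp only [rhsBlock, coeff_add, coeff_C_mul, X, monomial_mul, mul_one, coeff_monomial,
    hU.symm, hV.symm, hS.symm, hF.symm, if_false, mul_zero, add_zero, ne_eq,
    not_true_eq_false] at h

end Rhs

variable (c) in
/-- The properties of `ℳ̂ = s_{n,L_n-1}·u·ℳ` used to compute its coefficients. -/
structure Admissible (n : ℕ) (u : σ) (T : σ →₀ ℕ) : Prop where
  apply_le_one : T u ≤ 1
  apply_ne_zero_of_le : ∀ w, c.IsReactantComplex w → w ≤ T → w u ≠ 0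
  apply_act : T (c.act (n - 1)) = 0
  apply_S_top : T (c.S n (c.L n)) = 0
  apply_F : T (c.F n) = 0
  apply_S_succ : n + 1 ≤ c.N → ∀ j ≤ c.L (n + 1), T (c.S (n + 1) j) = 0

/-- `ℳ` contains no variable of layer `n` or beyond, and no two reacting species, so the only
way `ℳ̂` could contain `S_{m-1,L_{m-1}} + S_{m,j-1}` is with `s_{n-1,L_{n-1}}` dividing `ℳ`. -/
theorem not_act_and_S_of_apply_ne_zero {n : ℕ} (hn1 : 1 ≤ n) (hnN : n ≤ c.N) {M : ℕ}
    {z : Fin M → σ} {T : σ →₀ ℕ}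
    (hsub : ∀ {v}, c.IsSubstrate v → T v ≠ 0 → v = c.S n (c.L n - 1) ∨ ∃ jj, z jj = v)
    (hnoreact : ¬ ∃ j₁ j₂ : Fin M, j₁ ≠ j₂ ∧ c.reactsWith (z j₁) (z j₂))
    (hnotdvd : ∀ jj, z jj ≠ c.act (n - 1)) {m j : ℕ} (hm1 : 1 ≤ m) (hm2 : m ≤ c.N)
    (hj1 : 1 ≤ j) (hj2 : j ≤ c.L m) (hact : T (c.act (m - 1)) ≠ 0)
    (hS : T (c.S m (j - 1)) ≠ 0) : False := by
  have hLn := c.Lpos n hn1 hnN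
  obtain ⟨jj₁, hjj₁⟩ : ∃ jj, z jj = c.act (m - 1) :=
    (hsub (isSubstrate_act hm1 hm2) hact).resolve_left
      (act_ne_S hm1 hm2 hn1 hnN (Nat.sub_le _ _) (Or.inr (by omega)))
  obtain ⟨jj₂, hjj₂⟩ : ∃ jj, z jj = c.S m (j - 1) := by
    refine (hsub (isSubstrate_S hm1 hm2 (by omega)) hS).resolve_left fun h => hnotdvd jj₁ ?_
    obtain ⟨rfl, -⟩ := c.hSinj _ _ _ _ hm1 hm2 (by omega) hn1 hnN (Nat.sub_le _ _) h
    exact hjj₁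
  refine hnoreact ⟨jj₁, jj₂, fun h => ?_, m, j, hm1, hm2, hj1, hj2, Or.inl ⟨hjj₁, hjj₂⟩⟩
  rw [h, hjj₂] at hjj₁
  exact act_ne_S hm1 hm2 hm1 hm2 (by omega) (Or.inl (by omega)) hjj₁.symm

theorem admissible_lift {n : ℕ} (hn1 : 1 ≤ n) (hnN : n ≤ c.N) {u : σ} (hu : c.IsIntermediate u)
    {M : ℕ} {z : Fin M → σ} (hz : ∀ jj, c.IsSubstrateBelow n (z jj))
    (hnoreact : ¬ ∃ j₁ j₂ : Fin M, j₁ ≠ j₂ ∧ c.reactsWith (z j₁) (z j₂))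
    (hnotdvd : ∀ jj, z jj ≠ c.act (n - 1)) :
    c.Admissible n u
      (single (c.S n (c.L n - 1)) 1 + single u 1 + ∑ jj, single (z jj) 1) := by
  set T := single (c.S n (c.L n - 1)) 1 + single u 1 + ∑ jj, single (z jj) 1
  have hs : c.IsSubstrate (c.S n (c.L n - 1)) := isSubstrate_S hn1 hnN (Nat.sub_le _ _)
  have hzs (jj : Fin M) : c.IsSubstrate (z jj) := (hz jj).isSubstrate hnN
  have hsub {v : σ} (hv : c.IsSubstrate v) (hTv : T v ≠ 0) :
      v = c.S n (c.L n - 1) ∨ ∃ jj, z jj = v :=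
    (eq_or_eq_or_exists_of_apply_ne_zero hTv).imp_right
      (Or.resolve_left · (hv.ne_of_isIntermediate hu))
  have hinter {v : σ} (hv : c.IsIntermediate v) (hTv : T v ≠ 0) : v = u := by
    rcases eq_or_eq_or_exists_of_apply_ne_zero hTv with h | h | ⟨jj, h⟩
    exacts [(hs.ne_of_isIntermediate hv h.symm).elim, h,
      ((hzs jj).ne_of_isIntermediate hv h).elim]
  have hF {m : ℕ} (hm1 : 1 ≤ m) (hm2 : m ≤ c.N) : T (c.F m) = 0 := by
    by_contra h
    obtain ⟨m', j', hm1', hm2', hj1', hj2', hu' | hu'⟩ := hu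
    all_goals rcases eq_or_eq_or_exists_of_apply_ne_zero h with h | h | ⟨jj, h⟩
    all_goals first
      | exact hs.ne_F hm1 hm2 h.symm
      | exact (hzs jj).ne_F hm1 hm2 h
      | exact c.hFU m m' j' hm1 hm2 hm1' hm2' hj1' hj2' (h.trans hu')
      | exact c.hFV m m' j' hm1 hm2 hm1' hm2' hj1' hj2' (h.trans hu')
  have hle {a : σ} {w : σ →₀ ℕ} (ha : single a 1 ≤ w) (hw : w ≤ T) : T a ≠ 0 :=
    Nat.one_le_iff_ne_zero.1 (Finsupp.single_le_iff.1 (ha.trans hw))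
  refine ⟨?_, ?_, ?_, ?_, hF hn1 hnN, ?_⟩
  · have hM : (∑ jj, single (z jj) 1 : σ →₀ ℕ) u = 0 := by
      by_contra h
      obtain ⟨jj, hjj⟩ := exists_eq_of_sum_single_apply_ne_zero h
      exact (hzs jj).ne_of_isIntermediate hu hjj
    simp only [T, Finsupp.add_apply, hM, Finsupp.single_eq_same,
      Finsupp.single_eq_of_ne (hs.ne_of_isIntermediate hu).symm, zero_add, add_zero, le_refl]
  · rintro w ⟨m, j, hm1, hm2, hj1, hj2, rfl | rfl | rfl | rfl⟩ hw
    · simp [hinter ⟨m, j, hm1, hm2, hj1, hj2, Or.inl rfl⟩ (hle le_rfl hw)]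
    · simp [hinter ⟨m, j, hm1, hm2, hj1, hj2, Or.inr rfl⟩ (hle le_rfl hw)]
    · exact (not_act_and_S_of_apply_ne_zero hn1 hnN hsub hnoreact hnotdvd hm1 hm2 hj1 hj2
        (hle le_self_add hw) (hle le_add_self hw)).elim
    · exact (hle le_self_add hw (hF hm1 hm2)).elim
  · by_contra h
    rcases hsub (isSubstrate_act hn1 hnN) h with h | ⟨jj, h⟩
    · exact act_ne_S hn1 hnN hn1 hnN (Nat.sub_le _ _) (Or.inl (by omega)) h
    · exact hnotdvd jj h
  · by_contra h
    rcases hsub (isSubstrate_S hn1 hnN le_rfl) h with h | ⟨jj, h⟩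
    · have := (c.hSinj _ _ _ _ hn1 hnN le_rfl hn1 hnN (Nat.sub_le _ _) h).2
      have := c.Lpos n hn1 hnN
      omega
    · exact (hz jj).ne_S hn1 hnN le_rfl le_rfl h
  · intro hn j hj
    by_contra h
    rcases hsub (isSubstrate_S (by omega) hn hj) h with h | ⟨jj, h⟩
    · have := (c.hSinj _ _ _ _ (by omega) hn hj hn1 hnN (Nat.sub_le _ _) h).1
      omega
    · exact (hz jj).ne_S (by omega) hn hj (by omega) h

theorem Admissible.apply_ne_zero_of_coeff_rhs [DecidableEq σ] {k : ℕ → ℕ → Fin 6 → ℝ} {n : ℕ}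
    {u : σ} {T : σ →₀ ℕ} (hT : c.Admissible n u T) :
    ∀ x w, coeff w (c.rhs k x) ≠ 0 → w ≤ T → w u ≠ 0 := fun _ w hw =>
  hT.apply_ne_zero_of_le w (isReactantComplex_of_coeff_rhs_ne_zero hw)

section Coefficients

variable [Fintype σ] [DecidableEq σ] {k : ℕ → ℕ → Fin 6 → ℝ} {n : ℕ} {u : σ}

theorem coeff_lieDIter_U_top_succ (hn1 : 1 ≤ n) (hnN : n ≤ c.N) {Tm : σ →₀ ℕ}
    (hT : c.Admissible n u (single (c.S n (c.L n - 1)) 1 + Tm)) (t : ℕ) :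
    coeff (single (c.S n (c.L n - 1)) 1 + Tm)
        (lieDIter (c.rhs k) (t + 1) (X (c.U n (c.L n)))) =
      k n (c.L n) 0 * coeff Tm (c.deriv k t (c.act (n - 1)))
        + -(k n (c.L n) 1 + k n (c.L n) 2) * coeff (single (c.S n (c.L n - 1)) 1 + Tm)
          (lieDIter (c.rhs k) t (X (c.U n (c.L n)))) := by
  rw [coeff_lieDIter_succ_X (rhs_U hn1 hnN (c.Lpos n hn1 hnN) le_rfl),
    coeff_lieDIter_X_mul hT.apply_le_one hT.apply_ne_zero_of_coeff_rhs hT.apply_act, deriv,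
    add_comm (single _ 1) Tm, coeff_mul_X]

theorem coeff_deriv_S_top_succ (hn1 : 1 ≤ n) (hnN : n ≤ c.N) {Tm : σ →₀ ℕ}
    (hT : c.Admissible n u (single (c.S n (c.L n - 1)) 1 + Tm)) (t : ℕ) :
    coeff (single (c.S n (c.L n - 1)) 1 + Tm) (c.deriv k (t + 1) (c.S n (c.L n))) =
      k n (c.L n) 2 * coeff (single (c.S n (c.L n - 1)) 1 + Tm)
        (lieDIter (c.rhs k) t (X (c.U n (c.L n)))) := by
  set T := single (c.S n (c.L n - 1)) 1 + Tm
  have hLn := c.Lpos n hn1 hnN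
  have hs : c.IsSubstrate (c.S n (c.L n - 1)) := isSubstrate_S hn1 hnN (Nat.sub_le _ _)
  have hpair {a b : σ} (ha : T a = 0) (hb : T b = 0) (t : ℕ) :
      coeff T (lieDIter (c.rhs k) t (X a * X b)) = 0 :=
    coeff_lieDIter_X_mul_X_eq_zero hT.apply_le_one hT.apply_ne_zero_of_coeff_rhs ha hb t
  have hsingle {v : σ} (hv : v ≠ c.S n (c.L n - 1)) : T ≠ single v 1 :=
    Finsupp.single_add_ne_single hv Tm
  rw [deriv, lieDIter_succ', lieD_X, rhs_S_top hn1 hnN, lieDIter_add, lieDIter_add, lieDIter_add,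
    lieDIter_C_mul, lieDIter_C_mul, lieDIter_C_mul, lieDIter_sum, coeff_add, coeff_add, coeff_add,
    coeff_C_mul, coeff_C_mul, coeff_C_mul, coeff_sum, hpair hT.apply_F hT.apply_S_top,
    coeff_lieDIter_X_eq_zero (rhs_V hn1 hnN hLn le_rfl) (hpair hT.apply_F hT.apply_S_top)
      (hsingle (hs.ne_V hn1 hnN hLn le_rfl).symm),
    sum_eq_zero fun m hm => ?_]
  · ring
  rw [mem_Icc] at hm
  split_ifs with hmn
  · subst hmn
    have hact : T (c.act (n + 1 - 1)) = 0 := by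
      rw [Nat.add_sub_cancel, act_of_pos hn1]
      exact hT.apply_S_top
    rw [lieDIter_sum, coeff_sum]
    refine sum_eq_zero fun j hj => ?_
    rw [mem_Icc] at hj
    have hS' := hT.apply_S_succ hm.2 (j - 1) (by omega)
    rw [lieDIter_add, lieDIter_C_mul, lieDIter_C_mul, coeff_add, coeff_C_mul, coeff_C_mul,
      hpair hT.apply_S_top hS',
      coeff_lieDIter_X_eq_zero (rhs_U hm.1 hm.2 hj.1 hj.2) (hpair hact hS')
        (hsingle (hs.ne_U hm.1 hm.2 hj.1 hj.2).symm)]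
    ring
  · rw [lieDIter_eq_pow_apply, map_zero, coeff_zero]

theorem coeff_lieDIter_U_top_eq_zero (hn1 : 1 ≤ n) (hnN : n ≤ c.N) {Tm : σ →₀ ℕ}
    (hT : c.Admissible n u (single (c.S n (c.L n - 1)) 1 + Tm)) {ℓ₀ : ℕ}
    (hmin : ∀ ℓ < ℓ₀, coeff Tm (c.deriv k ℓ (c.act (n - 1))) = 0) {t : ℕ} (ht : t ≤ ℓ₀) :
    coeff (single (c.S n (c.L n - 1)) 1 + Tm) (lieDIter (c.rhs k) t (X (c.U n (c.L n)))) = 0 := by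
  induction t with
  | zero =>
    have hU := (isSubstrate_S (c := c) hn1 hnN (Nat.sub_le _ 1)).ne_U hn1 hnN (c.Lpos n hn1 hnN)
      le_rfl
    exact coeff_X_eq_zero_of_ne (single_add_ne_single hU.symm Tm)
  | succ t ih =>
    rw [coeff_lieDIter_U_top_succ hn1 hnN hT, hmin t (by omega), ih (by omega)]
    ring

theorem coeff_deriv_S_top_eq_zero (hn1 : 1 ≤ n) (hnN : n ≤ c.N) {Tm : σ →₀ ℕ}
    (hT : c.Admissible n u (single (c.S n (c.L n - 1)) 1 + Tm)) {ℓ₀ : ℕ}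
    (hmin : ∀ ℓ < ℓ₀, coeff Tm (c.deriv k ℓ (c.act (n - 1))) = 0) :
    ∀ ℓ < ℓ₀ + 2, coeff (single (c.S n (c.L n - 1)) 1 + Tm) (c.deriv k ℓ (c.S n (c.L n))) = 0
  | 0, _ => by
    have hne : c.S n (c.L n) ≠ c.S n (c.L n - 1) := fun h => by
      have := (c.hSinj _ _ _ _ hn1 hnN le_rfl hn1 hnN (Nat.sub_le _ _) h).2
      have := c.Lpos n hn1 hnN
      omega
    exact coeff_X_eq_zero_of_ne (single_add_ne_single hne Tm)
  | t + 1, ht => by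
    rw [coeff_deriv_S_top_succ hn1 hnN hT, coeff_lieDIter_U_top_eq_zero hn1 hnN hT hmin (by omega),
      mul_zero]

end Coefficients

variable [Fintype σ] [DecidableEq σ]

/-- **Lemma.** In the `N`-layer cascade, let `1 ≤ n ≤ N` and let `u·ℳ` be a monomial
appearing in `s_{n-1,L_{n-1}}^{(ℓ₀)}` (the variable `act (n-1)`) but in no lower-order
derivative, where `u` is an intermediate species of the cascade and `ℳ = ∏_j z j`
involves only variables of species among `{S k j : 1 ≤ k ≤ n-1} ∪ {E}`. Assume `ℳ`
does not contain two variables of species reacting together and `s_{n-1,L_{n-1}}` does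
not divide `ℳ`. Then `ℳ̂ = s_{n,L_n-1}·u·ℳ` appears in `s_{n,L_n}^{(ℓ₀+2)}` with
coefficient `c_{n,L_n}·a_{n,L_n}·C` (where `C` is the coefficient of `u·ℳ` in
`s_{n-1,L_{n-1}}^{(ℓ₀)}`) and in no lower-order derivative of `s_{n,L_n}`; moreover the
coefficient of `ℳ̂` in `s_{n,L_n}^{(ℓ₀+3)}` equals `c_{n,L_n}·a_{n,L_n}·(C̃ - K_{n,L_n}·C)`
where `C̃` is the coefficient of `u·ℳ` in `s_{n-1,L_{n-1}}^{(ℓ₀+1)}`. -/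
theorem monomial_lift_intermediate
    (c : Cascade σ) (k : ℕ → ℕ → Fin 6 → ℝ)
    (hk : ∀ m j, 1 ≤ m → m ≤ c.N → 1 ≤ j → j ≤ c.L m → ∀ t, 0 < k m j t)
    (n : ℕ) (hn1 : 1 ≤ n) (hnN : n ≤ c.N)
    (u : σ)
    (hu : ∃ m j, 1 ≤ m ∧ m ≤ c.N ∧ 1 ≤ j ∧ j ≤ c.L m ∧ (u = c.U m j ∨ u = c.V m j))
    (M : ℕ) (z : Fin M → σ)
    (hvars : ∀ jj, z jj = c.E ∨ ∃ kk, 1 ≤ kk ∧ kk ≤ n - 1 ∧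
      ∃ j', j' ≤ c.L kk ∧ z jj = c.S kk j')
    (ℓ₀ : ℕ)
    (happ : MvPolynomial.coeff (Finsupp.single u 1 + ∑ jj, Finsupp.single (z jj) 1)
      (c.deriv k ℓ₀ (c.act (n - 1))) ≠ 0)
    (hmin : ∀ ℓ < ℓ₀, MvPolynomial.coeff
      (Finsupp.single u 1 + ∑ jj, Finsupp.single (z jj) 1)
      (c.deriv k ℓ (c.act (n - 1))) = 0)
    (hnoreact : ¬ ∃ j₁ j₂ : Fin M, j₁ ≠ j₂ ∧ c.reactsWith (z j₁) (z j₂))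
    (hnotdvd : ∀ jj, z jj ≠ c.act (n - 1)) :
    MvPolynomial.coeff
        (Finsupp.single (c.S n (c.L n - 1)) 1 + Finsupp.single u 1 +
          ∑ jj, Finsupp.single (z jj) 1)
        (c.deriv k (ℓ₀ + 2) (c.S n (c.L n))) ≠ 0
    ∧ MvPolynomial.coeff
        (Finsupp.single (c.S n (c.L n - 1)) 1 + Finsupp.single u 1 +
          ∑ jj, Finsupp.single (z jj) 1)
        (c.deriv k (ℓ₀ + 2) (c.S n (c.L n)))
      = k n (c.L n) 2 * k n (c.L n) 0 *
          MvPolynomial.coeff (Finsupp.single u 1 + ∑ jj, Finsupp.single (z jj) 1)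
            (c.deriv k ℓ₀ (c.act (n - 1)))
    ∧ (∀ ℓ < ℓ₀ + 2,
        MvPolynomial.coeff
          (Finsupp.single (c.S n (c.L n - 1)) 1 + Finsupp.single u 1 +
            ∑ jj, Finsupp.single (z jj) 1)
          (c.deriv k ℓ (c.S n (c.L n))) = 0)
    ∧ MvPolynomial.coeff
        (Finsupp.single (c.S n (c.L n - 1)) 1 + Finsupp.single u 1 +
          ∑ jj, Finsupp.single (z jj) 1)
        (c.deriv k (ℓ₀ + 3) (c.S n (c.L n)))
      = k n (c.L n) 2 * k n (c.L n) 0 *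
          (MvPolynomial.coeff (Finsupp.single u 1 + ∑ jj, Finsupp.single (z jj) 1)
              (c.deriv k (ℓ₀ + 1) (c.act (n - 1)))
            - (k n (c.L n) 1 + k n (c.L n) 2) *
                MvPolynomial.coeff
                  (Finsupp.single u 1 + ∑ jj, Finsupp.single (z jj) 1)
                  (c.deriv k ℓ₀ (c.act (n - 1)))) := by
  set Tm : σ →₀ ℕ := single u 1 + ∑ jj, single (z jj) 1
  have hT : c.Admissible n u (single (c.S n (c.L n - 1)) 1 + Tm) := by
    rw [← add_assoc]
    exact admissible_lift hn1 hnN hu hvars hnoreact hnotdvd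
  rw [add_assoc]
  have hLn := c.Lpos n hn1 hnN
  have hS := coeff_deriv_S_top_succ (k := k) hn1 hnN hT
  have hU := coeff_lieDIter_U_top_succ (k := k) hn1 hnN hT
  have hlow := coeff_lieDIter_U_top_eq_zero hn1 hnN hT hmin le_rfl
  have h₂ : coeff (single (c.S n (c.L n - 1)) 1 + Tm) (c.deriv k (ℓ₀ + 2) (c.S n (c.L n))) =
      k n (c.L n) 2 * k n (c.L n) 0 * coeff Tm (c.deriv k ℓ₀ (c.act (n - 1))) := by
    rw [hS, hU, hlow]
    ring
  refine ⟨?_, h₂, coeff_deriv_S_top_eq_zero hn1 hnN hT hmin, ?_⟩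
  · rw [h₂]
    exact mul_ne_zero (mul_ne_zero (hk n _ hn1 hnN hLn le_rfl 2).ne'
      (hk n _ hn1 hnN hLn le_rfl 0).ne') happ
  · rw [hS, hU, hU, hlow]
    ring

end Cascade
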